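/- arXiv:1607.05030 — 6 statements merged into one kernel-verified Lean document; each statement's English description precedes it below -/
import Mathlib

section
/- For all integers t, k, j' with 0 ≤ k ≤ min(j'-1, t-1-j'), the binomial identity C(t-1-2k, j'-k)·C(t-1-k, k-1) + C(t-1-2k, j'-1-k)·C(t-k, k) = C(t-1-k, t-j'-k)·C(j', k) holds, with the convention C(n, -1) = 0. -/
/-!
Write `j' = k + 1 + a` and `t = 2k + a + b + 2`. For `k = 0` the identity is the symmetry
`C(a+b+1, a) = C(a+b+1, b+1)`. For `k = m + 1` each of the three products is a rational multiple of
`P = C(a+b+1, a) · C(m+a+b+2, m)`, and after multiplying by `(a+1)(m+1)` the identity becomes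
`(b+1)(m+1) + (a+1)(m+a+b+3) = (a+b+2)(m+a+2)`.
-/

namespace Nat

lemma choose_mul_choose_mul_add_one_mul_add_one (a b m : ℕ) :
    (m + a + b + 2).choose (b + 1) * (m + a + 2).choose (m + 1) * ((a + 1) * (m + 1))
      = (a + b + 1).choose a * (m + a + b + 2).choose m * ((a + b + 2) * (m + a + 2)) := by
  have hsymm : (m + a + b + 2).choose (b + 1) = (m + a + b + 2).choose (m + a + 1) :=
    choose_symm_of_eq_add (by omega)
  have htri : (m + a + b + 2).choose (m + a + 1) * (m + a + 1).choose m
      = (m + a + b + 2).choose m * (a + b + 2).choose (a + 1) := by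
    rw [choose_mul (by omega), show m + a + b + 2 - m = a + b + 2 by omega,
      show m + a + 1 - m = a + 1 by omega]
  have hm := add_one_mul_choose_eq (m + a + 1) m
  have ha := add_one_mul_choose_eq (a + b + 1) a
  calc (m + a + b + 2).choose (b + 1) * (m + a + 2).choose (m + 1) * ((a + 1) * (m + 1))
      = (m + a + b + 2).choose (m + a + 1) * ((m + a + 2).choose (m + 1) * (m + 1)) * (a + 1) := by
        rw [hsymm]; ring
    _ = (m + a + b + 2).choose (m + a + 1) * (m + a + 1).choose m * (m + a + 2) * (a + 1) := by
        rw [← hm]; ring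
    _ = (m + a + b + 2).choose m * ((a + b + 2).choose (a + 1) * (a + 1)) * (m + a + 2) := by
        rw [htri]; ring
    _ = (a + b + 1).choose a * (m + a + b + 2).choose m * ((a + b + 2) * (m + a + 2)) := by
        rw [← ha]; ring

lemma choose_mul_choose_add_choose_mul_choose (a b m : ℕ) :
    (a + b + 1).choose (a + 1) * (m + a + b + 2).choose m
      + (a + b + 1).choose a * (m + a + b + 3).choose (m + 1)
      = (m + a + b + 2).choose (b + 1) * (m + a + 2).choose (m + 1) := by
  have ha : (a + b + 1).choose (a + 1) * (a + 1) = (a + b + 1).choose a * (b + 1) := by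
    rw [choose_succ_right_eq, show a + b + 1 - a = b + 1 by omega]
  have hm : (m + a + b + 3).choose (m + 1) * (m + 1)
      = (m + a + b + 2).choose m * (m + a + b + 3) := by
    rw [mul_comm _ (m + a + b + 3)]; exact (add_one_mul_choose_eq _ _).symm
  apply Nat.eq_of_mul_eq_mul_right (show 0 < (a + 1) * (m + 1) by positivity)
  rw [choose_mul_choose_mul_add_one_mul_add_one]
  calc ((a + b + 1).choose (a + 1) * (m + a + b + 2).choose m
        + (a + b + 1).choose a * (m + a + b + 3).choose (m + 1)) * ((a + 1) * (m + 1))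
      = (a + b + 1).choose (a + 1) * (a + 1) * (m + a + b + 2).choose m * (m + 1)
        + (a + b + 1).choose a * (a + 1) * ((m + a + b + 3).choose (m + 1) * (m + 1)) := by
        ring
    _ = (a + b + 1).choose a * (m + a + b + 2).choose m * ((a + b + 2) * (m + a + 2)) := by
        rw [ha, hm]; ring

end Nat

open Nat

/-- Binomial identity used in the extraction of the 8-vertex correlation function:
`C(t-1-2k, j'-k)·C(t-1-k, k-1) + C(t-1-2k, j'-1-k)·C(t-k, k) = C(t-1-k, t-j'-k)·C(j', k)`,
with the convention `C(n, -1) = 0` (handled by the `if k = 0` clause). -/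
theorem stmt0 (t k j' : ℕ) (hk1 : k ≤ j' - 1) (hj : 1 ≤ j')
    (hk2 : k ≤ t - 1 - j') (hj2 : j' + 1 ≤ t) :
    (t - 1 - 2 * k).choose (j' - k) * (if k = 0 then 0 else (t - 1 - k).choose (k - 1))
      + (t - 1 - 2 * k).choose (j' - 1 - k) * (t - k).choose k
    = (t - 1 - k).choose (t - j' - k) * j'.choose k := by
  obtain ⟨a, rfl⟩ : ∃ a, j' = k + 1 + a := ⟨j' - k - 1, by omega⟩
  obtain ⟨b, rfl⟩ : ∃ b, t = 2 * k + a + b + 2 := ⟨t - 1 - (k + 1 + a) - k, by omega⟩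
  rcases k with _ | m
  · simp only [if_true, mul_zero, zero_add, choose_zero_right, mul_one]
    apply choose_symm_of_eq_add
    omega
  · rw [if_neg (succ_ne_zero m),
      show 2 * (m + 1) + a + b + 2 - 1 - 2 * (m + 1) = a + b + 1 by omega,
      show m + 1 + 1 + a - (m + 1) = a + 1 by omega,
      show 2 * (m + 1) + a + b + 2 - 1 - (m + 1) = m + a + b + 2 by omega,
      show m + 1 - 1 = m by omega, show m + 1 + 1 + a - 1 - (m + 1) = a by omega,
      show 2 * (m + 1) + a + b + 2 - (m + 1) = m + a + b + 3 by omega,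
      show 2 * (m + 1) + a + b + 2 - (m + 1 + 1 + a) - (m + 1) = b + 1 by omega,
      show m + 1 + 1 + a = m + a + 2 by omega]
    exact choose_mul_choose_add_choose_mul_choose a b m
end

section
/- Let Δ, P, x be elements of a commutative ring and l a formal variable. The formal power series expansion in l of (1 + l(Δ + xD)) / (1 + Δ(1+x²)l + P x² l²) has coefficient of l^t equal to f(t) + (Δ + xD)·f(t-1), where f(t) = Σ_{k=0}^{⌊t/2⌋} C(t-k,k)·(-1)^{t-k}·Δ^{t-2k}·P^k·x^{2k}·(1+x²)^{t-2k} and f(-1)=0. -/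
/-!
With `a = Δ(1+x²)` and `b = Px²`, the `k`-th summand of `f(t)` is `C(t-k,k) (-a)^(t-2k) (-b)^k`, so
`f` is the bivariate Fibonacci sequence `u` with `u₀ = 1`, `u₁ = -a`, `u_{t+2} = -a u_{t+1} - b u_t`
(Pascal's rule). That recurrence says exactly `(∑ u_t l^t) (1 + a l + b l²) = 1`, and the
coefficients `f(t) + (Δ + xD) f(t-1)` are those of `(1 + (Δ + xD) l) ∑ f(t) l^t`.
-/

section FibonacciSum

open Finset

variable {R : Type*} [CommRing R]

/-- The coefficient of `X ^ t` in `1 / (1 - p X - q X²)`; `fibSum 1 1 t = Nat.fib (t + 1)`. -/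
def fibSum (p q : R) (t : ℕ) : R :=
  ∑ k ∈ range (t / 2 + 1), ((t - k).choose k : R) * p ^ (t - 2 * k) * q ^ k

lemma fibSum_eq_sum_range (p q : R) {t N : ℕ} (hN : t / 2 + 1 ≤ N) :
    fibSum p q t = ∑ k ∈ range N, ((t - k).choose k : R) * p ^ (t - 2 * k) * q ^ k := by
  refine sum_subset (range_subset_range.2 hN) fun k _ hk => ?_
  rw [mem_range] at hk
  rw [Nat.choose_eq_zero_of_lt (by omega), Nat.cast_zero, zero_mul, zero_mul]

lemma fibSum_zero (p q : R) : fibSum p q 0 = 1 := by simp [fibSum]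

lemma fibSum_one (p q : R) : fibSum p q 1 = p := by simp [fibSum]

lemma choose_mul_pow_add_two (p q : R) {t k : ℕ} (hk : 2 * k ≤ t) :
    ((t + 2 - (k + 1)).choose (k + 1) : R) * p ^ (t + 2 - 2 * (k + 1)) * q ^ (k + 1)
      = p * (((t + 1 - (k + 1)).choose (k + 1) : R) * p ^ (t + 1 - 2 * (k + 1)) * q ^ (k + 1))
        + q * (((t - k).choose k : R) * p ^ (t - 2 * k) * q ^ k) := by
  obtain ⟨m, rfl⟩ := Nat.exists_eq_add_of_le hk
  rw [show 2 * k + m + 2 - (k + 1) = k + m + 1 by omega,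
    show 2 * k + m + 2 - 2 * (k + 1) = m by omega,
    show 2 * k + m + 1 - (k + 1) = k + m by omega,
    show 2 * k + m - k = k + m by omega, Nat.add_sub_cancel_left]
  rcases m with _ | m
  · simp [Nat.choose_succ_self, pow_succ']
  · rw [show 2 * k + (m + 1) + 1 - 2 * (k + 1) = m by omega, ← add_assoc,
      Nat.choose_succ_succ']
    push_cast
    ring

lemma fibSum_add_two (p q : R) (t : ℕ) :
    fibSum p q (t + 2) = p * fibSum p q (t + 1) + q * fibSum p q t := by
  rw [fibSum_eq_sum_range p q (show (t + 2) / 2 + 1 ≤ t / 2 + 1 + 1 by omega),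
    fibSum_eq_sum_range p q (show (t + 1) / 2 + 1 ≤ t / 2 + 1 + 1 by omega), fibSum,
    sum_range_succ' _ (t / 2 + 1), sum_range_succ' _ (t / 2 + 1),
    sum_congr rfl fun k hk => choose_mul_pow_add_two p q (by rw [mem_range] at hk; omega),
    sum_add_distrib, ← mul_sum, ← mul_sum]
  simp only [mul_zero, tsub_zero, Nat.choose_zero_right, Nat.cast_one, one_mul, pow_zero,
    mul_one]
  ring

end FibonacciSum

section PowerSeries

open PowerSeries

variable {R : Type*} [CommRing R]

lemma mk_mul_one_sub_eq_one {u : ℕ → R} {p q : R}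
    (h0 : u 0 = 1) (h1 : u 1 = p) (hrec : ∀ t, u (t + 2) = p * u (t + 1) + q * u t) :
    mk u * (1 - C p * X - C q * X ^ 2) = 1 := by
  rw [show mk u * (1 - C p * X - C q * X ^ 2)
      = mk u - C p * (mk u * X) - C q * (mk u * X ^ 2) by ring]
  ext (_ | _ | t) <;> simp [coeff_succ_mul_X, coeff_mul_X_pow', h0, h1, hrec]

lemma mk_add_mul_shift (u : ℕ → R) (c : R) :
    mk (fun t => u t + c * (if t = 0 then 0 else u (t - 1))) = (1 + C c * X) * mk u := by
  ext (_ | t) <;> simp [add_mul, mul_assoc, coeff_succ_X_mul]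

end PowerSeries

open PowerSeries in
/-- The formal power series expansion in `l` of
`(1 + l(Δ + xD)) / (1 + Δ(1+x²)l + P x² l²)` has coefficient of `l^t` equal to
`f(t) + (Δ + xD) f(t-1)`, where
`f(t) = Σ_{k=0}^{⌊t/2⌋} C(t-k,k) (−1)^{t-k} Δ^{t-2k} P^k x^{2k} (1+x²)^{t-2k}`
and `f(-1) = 0`.  Since the denominator has constant coefficient `1`, this is
equivalent to the series of coefficients multiplied by the denominator being
equal to the numerator. -/
theorem stmt1 {R : Type*} [CommRing R] (Δ D P x : R) (f : ℕ → R)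
    (hf : ∀ t : ℕ, f t = ∑ k ∈ Finset.range (t / 2 + 1),
      ((t - k).choose k : R) * (-1 : R) ^ (t - k) * Δ ^ (t - 2 * k) * P ^ k
        * x ^ (2 * k) * (1 + x ^ 2) ^ (t - 2 * k)) :
    (PowerSeries.mk fun t : ℕ =>
        f t + (Δ + x * D) * (if t = 0 then 0 else f (t - 1)))
      * (1 + PowerSeries.C (Δ * (1 + x ^ 2)) * PowerSeries.X
          + PowerSeries.C (P * x ^ 2) * PowerSeries.X ^ 2)
    = 1 + PowerSeries.C (Δ + x * D) * PowerSeries.X := by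
  have hf_fib : f = fibSum (-(Δ * (1 + x ^ 2))) (-(P * x ^ 2)) := by
    funext t
    refine (hf t).trans (Finset.sum_congr rfl fun k hk => ?_)
    obtain ⟨m, rfl⟩ :=
      Nat.exists_eq_add_of_le (show 2 * k ≤ t by rw [Finset.mem_range] at hk; omega)
    rw [show 2 * k + m - k = k + m by omega, Nat.add_sub_cancel_left, neg_pow (Δ * _), neg_pow (P * _),
      mul_pow, mul_pow]
    ring
  have hden : 1 + C (Δ * (1 + x ^ 2)) * X + C (P * x ^ 2) * X ^ 2
      = 1 - C (-(Δ * (1 + x ^ 2))) * X - C (-(P * x ^ 2)) * (X : R⟦X⟧) ^ 2 := by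
    simp only [map_neg]
    ring
  rw [mk_add_mul_shift, mul_assoc, hden, hf_fib,
    mk_mul_one_sub_eq_one (fibSum_zero _ _) (fibSum_one _ _) (fibSum_add_two _ _), mul_one]
end

section
/- Let m ∈ (0, 1/2], and let T, T₁ be independent geometric random variables with success probability 2m (taking values in {1,2,...}). Then for any positive integer t, P(2T + T₁ ≤ t) ≥ 1 − (1−2m)^{⌊t/2⌋} + (1−2m)^{t−1} − (1−2m)^{t−⌊t/2⌋−1}. -/
/-!
Bound the complementary event `2T + T₁ > t` by a union bound: either `T > ⌊t/2⌋`, which has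
probability `q^⌊t/2⌋` with `q = 1 - 2m`, or `T = a ≤ ⌊t/2⌋` and `T₁ > t - 2a`, which by independence
has probability `2m q^(a-1) q^(t-2a)`. Summed over `a`, these terms telescope to
`q^(t-⌊t/2⌋-1) - q^(t-1)`. Only subadditivity is used, so no measurability is needed.
-/

open MeasureTheory

section

variable {Ω : Type*} [MeasurableSpace Ω] (μ : Measure Ω)

lemma measure_inter_lt_le_tsum (A : Set Ω) (Y : Ω → ℕ) (n : ℕ) :
    μ (A ∩ {ω | n < Y ω}) ≤ ∑' i, μ (A ∩ {ω | Y ω = n + 1 + i}) := by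
  refine (measure_mono ?_).trans (measure_iUnion_le _)
  rintro ω ⟨hA, hY⟩
  exact Set.mem_iUnion.2 ⟨Y ω - (n + 1), hA, by simp only [Set.mem_ofPred_eq] at hY ⊢; omega⟩

lemma tsum_measure_eq_of_geometric {Y : Ω → ℕ} {p : ℝ} (hp0 : 0 < p) (hp1 : p ≤ 1)
    (hY : ∀ k, 1 ≤ k → μ {ω | Y ω = k} = ENNReal.ofReal (p * (1 - p) ^ (k - 1))) (n : ℕ) :
    ∑' i, μ {ω | Y ω = n + 1 + i} = ENNReal.ofReal ((1 - p) ^ n) := by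
  have hq0 : 0 ≤ 1 - p := by linarith
  have hq1 : 1 - p < 1 := by linarith
  have hterm : ∀ i, μ {ω | Y ω = n + 1 + i}
      = ENNReal.ofReal (p * (1 - p) ^ n * (1 - p) ^ i) := fun i => by
    rw [hY _ (by omega), show n + 1 + i - 1 = n + i by omega, pow_add, mul_assoc]
  rw [tsum_congr hterm, ← ENNReal.ofReal_tsum_of_nonneg (fun i => by positivity)
    ((summable_geometric_of_lt_one hq0 hq1).mul_left _), tsum_mul_left,
    tsum_geometric_of_lt_one hq0 hq1, sub_sub_cancel, mul_right_comm,
    mul_inv_cancel₀ hp0.ne', one_mul]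

lemma measure_inter_lt_le_of_geometric {Y : Ω → ℕ} {p : ℝ} (hp0 : 0 < p) (hp1 : p ≤ 1)
    (hY : ∀ k, 1 ≤ k → μ {ω | Y ω = k} = ENNReal.ofReal (p * (1 - p) ^ (k - 1)))
    {A : Set Ω} (hind : ∀ b, μ (A ∩ {ω | Y ω = b}) = μ A * μ {ω | Y ω = b}) (n : ℕ) :
    μ (A ∩ {ω | n < Y ω}) ≤ μ A * ENNReal.ofReal ((1 - p) ^ n) :=
  calc μ (A ∩ {ω | n < Y ω}) ≤ ∑' i, μ (A ∩ {ω | Y ω = n + 1 + i}) :=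
        measure_inter_lt_le_tsum μ A Y n
    _ = μ A * ENNReal.ofReal ((1 - p) ^ n) := by
        simp_rw [hind, ENNReal.tsum_mul_left, tsum_measure_eq_of_geometric μ hp0 hp1 hY n]

lemma measure_lt_le_of_geometric [IsProbabilityMeasure μ] {Y : Ω → ℕ} {p : ℝ} (hp0 : 0 < p)
    (hp1 : p ≤ 1)
    (hY : ∀ k, 1 ≤ k → μ {ω | Y ω = k} = ENNReal.ofReal (p * (1 - p) ^ (k - 1))) (n : ℕ) :
    μ {ω | n < Y ω} ≤ ENNReal.ofReal ((1 - p) ^ n) := by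
  simpa using measure_inter_lt_le_of_geometric μ hp0 hp1 hY (A := Set.univ) (by simp) n

end

lemma setOf_lt_two_mul_add_subset {Ω : Type*} (X Y : Ω → ℕ) (t : ℕ) :
    {ω | t < 2 * X ω + Y ω} ⊆ {ω | t / 2 < X ω} ∪
      ⋃ a ∈ Finset.range (t / 2 + 1), {ω | X ω = a} ∩ {ω | t - 2 * a < Y ω} := by
  intro ω (hω : t < 2 * X ω + Y ω)
  by_cases hX : t / 2 < X ω
  · exact Or.inl hX
  · exact Or.inr (Set.mem_biUnion (x := X ω) (Finset.mem_range.2 (by omega))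
      ⟨rfl, show t - 2 * X ω < Y ω by omega⟩)

lemma sum_range_geometric_mul_pow_eq (p : ℝ) {t B : ℕ} (hB : 2 * B ≤ t) :
    ∑ a ∈ Finset.range B, p * (1 - p) ^ a * (1 - p) ^ (t - 2 * (a + 1))
      = (1 - p) ^ (t - B - 1) - (1 - p) ^ (t - 1) := by
  have htelescope := Finset.sum_range_sub (fun a => (1 - p) ^ (t - 1 - a)) B
  rw [Nat.sub_zero] at htelescope
  rw [show t - B - 1 = t - 1 - B by omega, ← htelescope]
  refine Finset.sum_congr rfl fun a ha => ?_
  have ha : 2 * (a + 1) ≤ t := by rw [Finset.mem_range] at ha; omega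
  rw [mul_assoc, ← pow_add, show a + (t - 2 * (a + 1)) = t - 1 - (a + 1) by omega,
    show t - 1 - a = t - 1 - (a + 1) + 1 by omega, pow_succ]
  ring

lemma one_sub_le_toReal_measure_of_compl_le {Ω : Type*} [MeasurableSpace Ω] (μ : Measure Ω)
    [IsProbabilityMeasure μ] {S : Set Ω} {c : ℝ} (hc : 0 ≤ c)
    (h : μ Sᶜ ≤ ENNReal.ofReal c) : 1 - c ≤ (μ S).toReal := by
  have hle : 1 ≤ μ S + ENNReal.ofReal c :=
    calc (1 : ENNReal) = μ (S ∪ Sᶜ) := by rw [Set.union_compl_self, measure_univ]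
      _ ≤ μ S + μ Sᶜ := measure_union_le S Sᶜ
      _ ≤ μ S + ENNReal.ofReal c := by gcongr
  have := ENNReal.toReal_mono
    (ENNReal.add_ne_top.2 ⟨measure_ne_top μ S, ENNReal.ofReal_ne_top⟩) hle
  rw [ENNReal.toReal_add (measure_ne_top μ S) ENNReal.ofReal_ne_top,
    ENNReal.toReal_ofReal hc, ENNReal.toReal_one] at this
  linarith

theorem measure_lt_two_mul_add_le {Ω : Type*} [MeasurableSpace Ω] (μ : Measure Ω)
    [IsProbabilityMeasure μ] {X Y : Ω → ℕ} {p : ℝ} (hp0 : 0 < p) (hp1 : p ≤ 1)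
    (hX0 : μ {ω | X ω = 0} = 0)
    (hX : ∀ k, 1 ≤ k → μ {ω | X ω = k} = ENNReal.ofReal (p * (1 - p) ^ (k - 1)))
    (hY : ∀ k, 1 ≤ k → μ {ω | Y ω = k} = ENNReal.ofReal (p * (1 - p) ^ (k - 1)))
    (hind : ∀ a b : ℕ, μ ({ω | X ω = a} ∩ {ω | Y ω = b}) = μ {ω | X ω = a} * μ {ω | Y ω = b})
    (t : ℕ) :
    μ {ω | t < 2 * X ω + Y ω} ≤ ENNReal.ofReal
      ((1 - p) ^ (t / 2) + ((1 - p) ^ (t - t / 2 - 1) - (1 - p) ^ (t - 1))) := by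
  have hq0 : 0 ≤ 1 - p := by linarith
  have hsum : ∑ a ∈ Finset.range (t / 2 + 1),
      μ {ω | X ω = a} * ENNReal.ofReal ((1 - p) ^ (t - 2 * a))
      = ENNReal.ofReal ((1 - p) ^ (t - t / 2 - 1) - (1 - p) ^ (t - 1)) := by
    rw [Finset.sum_range_succ', hX0, zero_mul, add_zero,
      ← sum_range_geometric_mul_pow_eq p (Nat.mul_div_le t 2), ENNReal.ofReal_sum_of_nonneg
        fun a _ => by positivity]
    refine Finset.sum_congr rfl fun a _ => ?_
    rw [hX _ (by omega), Nat.add_sub_cancel, ← ENNReal.ofReal_mul (by positivity)]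
  calc μ {ω | t < 2 * X ω + Y ω}
      ≤ μ {ω | t / 2 < X ω} + ∑ a ∈ Finset.range (t / 2 + 1),
          μ ({ω | X ω = a} ∩ {ω | t - 2 * a < Y ω}) :=
        (measure_mono (setOf_lt_two_mul_add_subset X Y t)).trans <|
          (measure_union_le _ _).trans (add_le_add le_rfl (measure_biUnion_finset_le _ _))
    _ ≤ ENNReal.ofReal ((1 - p) ^ (t / 2)) + ∑ a ∈ Finset.range (t / 2 + 1),
          μ {ω | X ω = a} * ENNReal.ofReal ((1 - p) ^ (t - 2 * a)) := by
        gcongr with a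
        · exact measure_lt_le_of_geometric μ hp0 hp1 hX _
        · exact measure_inter_lt_le_of_geometric μ hp0 hp1 hY (hind a) _
    _ = _ := by
        rw [hsum, ENNReal.ofReal_add (by positivity)
          (sub_nonneg.2 (pow_le_pow_of_le_one hq0 (by linarith) (by omega)))]

theorem stmt4_general {Ω : Type*} [MeasurableSpace Ω] (μ : Measure Ω) [IsProbabilityMeasure μ]
    (m : ℝ) (hm0 : 0 < m) (hm1 : m ≤ 1 / 2)
    (T T₁ : Ω → ℕ)
    (hT : ∀ k : ℕ, 1 ≤ k → μ {ω | T ω = k} = ENNReal.ofReal (2*m * (1 - 2*m) ^ (k - 1)))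
    (hT0 : μ {ω | T ω = 0} = 0)
    (hT₁ : ∀ k : ℕ, 1 ≤ k → μ {ω | T₁ ω = k} = ENNReal.ofReal (2*m * (1 - 2*m) ^ (k - 1)))
    (hind : ∀ a b : ℕ, μ ({ω | T ω = a} ∩ {ω | T₁ ω = b})
      = μ {ω | T ω = a} * μ {ω | T₁ ω = b}) :
    ∀ t : ℕ, 1 ≤ t →
      (μ {ω | 2 * T ω + T₁ ω ≤ t}).toReal
        ≥ 1 - (1 - 2*m) ^ (t / 2) + (1 - 2*m) ^ (t - 1) - (1 - 2*m) ^ (t - t / 2 - 1) := by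
  intro t _
  have hq0 : 0 ≤ 1 - 2 * m := by linarith
  have hcompl : {ω | 2 * T ω + T₁ ω ≤ t}ᶜ = {ω | t < 2 * T ω + T₁ ω} := by
    ext ω; simp
  have hbound := one_sub_le_toReal_measure_of_compl_le μ
    (add_nonneg (pow_nonneg hq0 _) (sub_nonneg.2 (pow_le_pow_of_le_one hq0 (by linarith)
      (by omega : t - t / 2 - 1 ≤ t - 1))))
    (hcompl ▸ measure_lt_two_mul_add_le μ (by linarith) (by linarith) hT0 hT hT₁ hind t)
  linarith

/-- For `m ∈ (0,1/2]` and `T, T₁` independent geometric random variables with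
success probability `2m` (values in `{1,2,…}`), for every `t ≥ 1`,
`P(2T + T₁ ≤ t) ≥ 1 − (1−2m)^⌊t/2⌋ + (1−2m)^{t−1} − (1−2m)^{t−⌊t/2⌋−1}`. -/
theorem stmt4 {Ω : Type*} [MeasurableSpace Ω] (μ : Measure Ω) [IsProbabilityMeasure μ]
    (m : ℝ) (hm0 : 0 < m) (hm1 : m ≤ 1 / 2)
    (T T₁ : Ω → ℕ)
    (hT : ∀ k : ℕ, 1 ≤ k → μ {ω | T ω = k} = ENNReal.ofReal (2*m * (1 - 2*m) ^ (k - 1)))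
    (hT0 : μ {ω | T ω = 0} = 0)
    (hT₁ : ∀ k : ℕ, 1 ≤ k → μ {ω | T₁ ω = k} = ENNReal.ofReal (2*m * (1 - 2*m) ^ (k - 1)))
    (hT₁0 : μ {ω | T₁ ω = 0} = 0)
    (hind : ∀ a b : ℕ, μ ({ω | T ω = a} ∩ {ω | T₁ ω = b})
      = μ {ω | T ω = a} * μ {ω | T₁ ω = b}) :
    ∀ t : ℕ, 1 ≤ t →
      (μ {ω | 2 * T ω + T₁ ω ≤ t}).toReal
        ≥ 1 - (1 - 2*m) ^ (t / 2) + (1 - 2*m) ^ (t - 1) - (1 - 2*m) ^ (t - t / 2 - 1) :=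
  stmt4_general μ m hm0 hm1 T T₁ hT hT0 hT₁ hind
end

section
/- Let E be a finite set, T a transition kernel from E³ to E with all entries positive, and D, U stochastic matrices on E. The (D,U)-horizontal-zigzag Markov chain distribution is invariant under the triangular PCA with kernel T if and only if for all y, y', z ∈ E: D(y,z)·U(z,y') = Σ_{x ∈ E} U(y,x)·D(x,y')·T(y,x,y'; z). -/
/-!
Sum the old line `a` out of the joint law of `(a, b, c)`. Each `a_j` meets only its own
factor, so the sum factorizes and, `U` being stochastic, equals the marginal of `b₀` times
`∏ᵢ Σₓ U(bᵢ;x) D(x;bᵢ₊₁) T(bᵢ,x,bᵢ₊₁;cᵢ)`. Sufficiency of the local balance is then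
immediate. Conversely, one site with `ρ = δₑ` gives the balance at every `y` with
`D(e;y) > 0`; there, positivity of `T` forces the whole row `D(y;·)` to be positive. Any `y`
is reached in two steps `y → y₀ → y` along positive entries of `D`, so the balance holds
everywhere.
-/

open Finset

section Window

variable {E : Type*} (T : E → E → E → E → ℝ) (D U : E → E → ℝ)

def windowFactor (ρ : E → ℝ) {n : ℕ} (b : Fin (n + 1) → E) (c : Fin n → E) :
    Fin (n + 2) → E → ℝ :=
  Fin.cases (fun e => ρ e * D e (b 0))
    (Fin.lastCases (fun e => U (b (Fin.last n)) e)
      fun i e => U (b i.castSucc) e * D e (b i.succ) * T (b i.castSucc) e (b i.succ) (c i))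

lemma window_summand_eq_prod_windowFactor (ρ : E → ℝ) {n : ℕ} (b : Fin (n + 1) → E)
    (c : Fin n → E) (a : Fin (n + 2) → E) :
    ρ (a 0)
        * (∏ i : Fin (n + 1), D (a i.castSucc) (b i) * U (b i) (a i.succ))
        * (∏ i : Fin n, T (b i.castSucc) (a i.succ.castSucc) (b i.succ) (c i))
      = ∏ j, windowFactor T D U ρ b c j (a j) := by
  rw [prod_mul_distrib,
    Fin.prod_univ_succ (f := fun i : Fin (n + 1) => D (a i.castSucc) (b i)),
    Fin.prod_univ_castSucc (f := fun i : Fin (n + 1) => U (b i) (a i.succ)),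
    Fin.prod_univ_succ (f := fun j : Fin (n + 2) => windowFactor T D U ρ b c j (a j)),
    Fin.prod_univ_castSucc
      (f := fun j : Fin (n + 1) => windowFactor T D U ρ b c j.succ (a j.succ))]
  simp only [windowFactor, Fin.cases_zero, Fin.cases_succ, Fin.lastCases_castSucc,
    Fin.lastCases_last, Fin.castSucc_zero, prod_mul_distrib]
  simp only [Fin.succ_castSucc]
  ring

variable [Fintype E]

lemma sum_window_eq (hUstoch : ∀ i, ∑ j, U i j = 1) (ρ : E → ℝ) (n : ℕ)
    (b : Fin (n + 1) → E) (c : Fin n → E) :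
    ∑ a : Fin (n + 2) → E,
        ρ (a 0)
          * (∏ i : Fin (n + 1), D (a i.castSucc) (b i) * U (b i) (a i.succ))
          * (∏ i : Fin n, T (b i.castSucc) (a i.succ.castSucc) (b i.succ) (c i))
      = (∑ e, ρ e * D e (b 0))
          * ∏ i : Fin n, ∑ x, U (b i.castSucc) x * D x (b i.succ)
              * T (b i.castSucc) x (b i.succ) (c i) := by
  simp only [window_summand_eq_prod_windowFactor]
  rw [← Fintype.prod_sum, Fin.prod_univ_succ, Fin.prod_univ_castSucc]
  simp only [windowFactor, Fin.cases_zero, Fin.cases_succ, Fin.lastCases_castSucc,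
    Fin.lastCases_last, hUstoch, mul_one]

end Window

section Balance

variable {E : Type*} [Fintype E] {T : E → E → E → E → ℝ} {D U : E → E → ℝ}

lemma exists_pos_of_sum_eq_one {ι : Type*} [Fintype ι] {f : ι → ℝ} (hf : ∑ i, f i = 1) :
    ∃ i, 0 < f i := by
  obtain ⟨i, -, hi⟩ := exists_lt_of_sum_lt (s := univ) (f := 0) (g := f) (by simp [hf])
  exact ⟨i, hi⟩

lemma mul_balance_of_window [DecidableEq E] (hUstoch : ∀ i, ∑ j, U i j = 1)
    (H : ∀ (ρ : E → ℝ), (∀ e, 0 ≤ ρ e) → (∑ e, ρ e = 1) →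
      ∀ (n : ℕ) (b : Fin (n + 1) → E) (c : Fin n → E),
        ∑ a : Fin (n + 2) → E,
          ρ (a 0)
            * (∏ i : Fin (n + 1), D (a i.castSucc) (b i) * U (b i) (a i.succ))
            * (∏ i : Fin n, T (b i.castSucc) (a i.succ.castSucc) (b i.succ) (c i))
        = (∑ e, ρ e * D e (b 0))
            * ∏ i : Fin n, D (b i.castSucc) (c i) * U (c i) (b i.succ))
    (e y y' z : E) :
    D e y * ∑ x, U y x * D x y' * T y x y' z = D e y * (D y z * U z y') := by
  have hδ_nonneg : 0 ≤ (Pi.single e 1 : E → ℝ) := Pi.single_nonneg.2 zero_le_one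
  have hδ := H (Pi.single e 1) hδ_nonneg (by simp) 1 ![y, y'] ![z]
  rw [sum_window_eq T D U hUstoch] at hδ
  simpa [Pi.single_apply] using hδ

lemma pos_of_balance (hTpos : ∀ y x y' z, 0 < T y x y' z)
    (hDnonneg : ∀ i j, 0 ≤ D i j) (hUnonneg : ∀ i j, 0 ≤ U i j)
    (hDstoch : ∀ i, ∑ j, D i j = 1) (hUstoch : ∀ i, ∑ j, U i j = 1) {y : E}
    (hy : ∀ y' z, ∑ x, U y x * D x y' * T y x y' z = D y z * U z y') (z : E) :
    0 < D y z := by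
  obtain ⟨x, hx⟩ := exists_pos_of_sum_eq_one (hUstoch y)
  obtain ⟨y', hy'⟩ := exists_pos_of_sum_eq_one (hDstoch x)
  have hflow : 0 < D y z * U z y' := by
    rw [← hy]
    refine sum_pos' (fun x' _ => ?_) ⟨x, mem_univ _, by have := hTpos y x y' z; positivity⟩
    have := hTpos y x' y' z
    have := hUnonneg y x'
    have := hDnonneg x' y'
    positivity
  exact (hDnonneg y z).lt_of_ne fun h => by simp [← h] at hflow

end Balance

theorem stmt9_general {E : Type*} [Fintype E]
    (T : E → E → E → E → ℝ)
    (hTpos : ∀ y x y' z, 0 < T y x y' z)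
    (D U : E → E → ℝ)
    (hDnonneg : ∀ i j, 0 ≤ D i j) (hUnonneg : ∀ i j, 0 ≤ U i j)
    (hDstoch : ∀ i, ∑ j, D i j = 1) (hUstoch : ∀ i, ∑ j, U i j = 1) :
    (∀ (ρ : E → ℝ), (∀ e, 0 ≤ ρ e) → (∑ e, ρ e = 1) →
      ∀ (n : ℕ) (b : Fin (n + 1) → E) (c : Fin n → E),
        ∑ a : Fin (n + 2) → E,
          ρ (a 0)
            * (∏ i : Fin (n + 1), D (a i.castSucc) (b i) * U (b i) (a i.succ))
            * (∏ i : Fin n, T (b i.castSucc) (a i.succ.castSucc) (b i.succ) (c i))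
        = (∑ e, ρ e * D e (b 0))
            * ∏ i : Fin n, D (b i.castSucc) (c i) * U (c i) (b i.succ))
    ↔ (∀ y y' z : E, D y z * U z y' = ∑ x, U y x * D x y' * T y x y' z) := by
  classical
  constructor
  · intro H y y' z
    have balance_of_pos : ∀ {e y : E}, 0 < D e y →
        ∀ y' z, ∑ x, U y x * D x y' * T y x y' z = D y z * U z y' :=
      fun he y' z => mul_left_cancel₀ he.ne' (mul_balance_of_window hUstoch H _ _ y' z)
    obtain ⟨y₀, hy₀⟩ := exists_pos_of_sum_eq_one (hDstoch y)
    have hy₀y : 0 < D y₀ y :=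
      pos_of_balance hTpos hDnonneg hUnonneg hDstoch hUstoch (balance_of_pos hy₀) y
    exact (balance_of_pos hy₀y y' z).symm
  · intro hbalance ρ _ _ n b c
    rw [sum_window_eq T D U hUstoch]
    simp only [hbalance]

/-- Finite-window form of the invariance criterion for triangular PCA
(Lemma "inv" of the paper): for a positive kernel `T` and stochastic matrices
`D, U`, the `(D,U)`-horizontal-zigzag Markov chain distribution is invariant
under the TPCA with kernel `T` — i.e. for every initial probability vector `ρ`
and every finite window, transporting the HZMC density of the pair of lines
`(a, b)` through the TPCA yields the HZMC density of the new pair of lines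
`(b, c)` (whose initial vector is the marginal `Σ_e ρ e · D(e; b₀)`) — if and
only if `D(y;z)·U(z;y') = Σ_x U(y;x)·D(x;y')·T(y,x,y';z)` for all `y, y', z`. -/
theorem stmt9 {E : Type*} [Fintype E] [DecidableEq E] [Nonempty E]
    (T : E → E → E → E → ℝ)
    (hTpos : ∀ y x y' z, 0 < T y x y' z)
    (hTstoch : ∀ y x y', ∑ z, T y x y' z = 1)
    (D U : E → E → ℝ)
    (hDnonneg : ∀ i j, 0 ≤ D i j) (hUnonneg : ∀ i j, 0 ≤ U i j)
    (hDstoch : ∀ i, ∑ j, D i j = 1) (hUstoch : ∀ i, ∑ j, U i j = 1) :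
    (∀ (ρ : E → ℝ), (∀ e, 0 ≤ ρ e) → (∑ e, ρ e = 1) →
      ∀ (n : ℕ) (b : Fin (n + 1) → E) (c : Fin n → E),
        ∑ a : Fin (n + 2) → E,
          ρ (a 0)
            * (∏ i : Fin (n + 1), D (a i.castSucc) (b i) * U (b i) (a i.succ))
            * (∏ i : Fin n, T (b i.castSucc) (a i.succ.castSucc) (b i.succ) (c i))
        = (∑ e, ρ e * D e (b 0))
            * ∏ i : Fin n, D (b i.castSucc) (c i) * U (c i) (b i.succ))
    ↔ (∀ y y' z : E, D y z * U z y' = ∑ x, U y x * D x y' * T y x y' z) :=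
  stmt9_general T hTpos D U hDnonneg hUnonneg hDstoch hUstoch
end

section
/- Let E = {0,1} and let D, U be stochastic 2×2 matrices with positive entries satisfying DU = UD. Define T^S(y,y';x) = D(y;x)U(x;y')/(DU)(y;y') and T^R(y,y';x) = U(y;x)D(x;y')/(DU)(y;y'). Then T^S(y,y';x) = T^R(y',y;x) for all y, y', x ∈ {0,1}. -/
/-!
Commutation of the `(0,0)` entries of `DU` and `UD` says `D 0 1 * U 1 0 = U 0 1 * D 1 0`, so both
`D` and `U` are in detailed balance with the positive weight `π = (D 1 0, D 0 1)`. Multiplying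
`D y x * U x y'` by `π y` and moving `π` through both factors gives `π y' * (U y' x * D x y)`;
summing over `x` does the same to the normalisations, so `π` cancels in the quotient.
-/

open Finset

def DetailedBalance {ι : Type*} (π : ι → ℝ) (P : ι → ι → ℝ) : Prop :=
  ∀ i j, π i * P i j = π j * P j i

theorem DetailedBalance.mul_mul_eq {ι : Type*} {π : ι → ℝ} {D U : ι → ι → ℝ}
    (hD : DetailedBalance π D) (hU : DetailedBalance π U) (y x y' : ι) :
    π y * (D y x * U x y') = π y' * (U y' x * D x y) := by
  calc π y * (D y x * U x y') = (π y * D y x) * U x y' := by ring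
    _ = D x y * (π x * U x y') := by rw [hD]; ring
    _ = π y' * (U y' x * D x y) := by rw [hU]; ring

theorem DetailedBalance.div_sum_mul_eq {ι : Type*} [Fintype ι] {π : ι → ℝ} {D U : ι → ι → ℝ}
    (hπ : ∀ i, π i ≠ 0) (hD : DetailedBalance π D) (hU : DetailedBalance π U) (y y' x : ι) :
    D y x * U x y' / (∑ k, D y k * U k y') = U y' x * D x y / (∑ k, U y' k * D k y) := by
  have hsum : π y * ∑ k, D y k * U k y' = π y' * ∑ k, U y' k * D k y := by
    simp only [mul_sum, hD.mul_mul_eq hU]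
  rw [← mul_div_mul_left _ _ (hπ y), hD.mul_mul_eq hU, hsum, mul_div_mul_left _ _ (hπ y')]

theorem detailedBalance_fin_two {π : Fin 2 → ℝ} {P : Fin 2 → Fin 2 → ℝ}
    (h : π 0 * P 0 1 = π 1 * P 1 0) : DetailedBalance π P := by
  intro i j
  fin_cases i <;> fin_cases j
  · rfl
  · exact h
  · exact h.symm
  · rfl

theorem stmt10_general (D U : Fin 2 → Fin 2 → ℝ)
    (hDpos : ∀ i j, 0 < D i j)
    (hcomm : ∀ i j, ∑ k, D i k * U k j = ∑ k, U i k * D k j) :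
    ∀ y y' x : Fin 2,
      D y x * U x y' / (∑ k, D y k * U k y')
        = U y' x * D x y / (∑ k, D y' k * U k y) := by
  intro y y' x
  have hcross : D 0 1 * U 1 0 = U 0 1 * D 1 0 := by
    have h00 := hcomm 0 0
    simp only [Fin.sum_univ_two] at h00
    linarith [mul_comm (D 0 0) (U 0 0)]
  let π : Fin 2 → ℝ := ![D 1 0, D 0 1]
  have hπ : ∀ i, π i ≠ 0 := fun i => by fin_cases i <;> exact (hDpos _ _).ne'
  have hD : DetailedBalance π D := detailedBalance_fin_two (mul_comm _ _)
  have hU : DetailedBalance π U := detailedBalance_fin_two <| by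
    show D 1 0 * U 0 1 = D 0 1 * U 1 0
    rw [mul_comm, ← hcross]
  rw [hcomm y' y]
  exact hD.div_sum_mul_eq hπ hU y y' x

/-- For `E = {0,1}` and positive row-stochastic matrices `D, U` with `DU = UD`,
the kernels `T^S(y,y';x) = D(y;x)U(x;y')/(DU)(y;y')` and
`T^R(y,y';x) = U(y;x)D(x;y')/(DU)(y;y')` satisfy `T^S(y,y';x) = T^R(y',y;x)`. -/
theorem stmt10 (D U : Fin 2 → Fin 2 → ℝ)
    (hDpos : ∀ i j, 0 < D i j) (hUpos : ∀ i j, 0 < U i j)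
    (hDstoch : ∀ i, ∑ j, D i j = 1) (hUstoch : ∀ i, ∑ j, U i j = 1)
    (hcomm : ∀ i j, ∑ k, D i k * U k j = ∑ k, U i k * D k j) :
    ∀ y y' x : Fin 2,
      D y x * U x y' / (∑ k, D y k * U k y')
        = U y' x * D x y / (∑ k, D y' k * U k y) :=
  stmt10_general D U hDpos hcomm
end

section
/- Let p ∈ [0,1], r = 0, and let (X_t) be the Markov chain on ℤ × {0,1} with X_0 = (0,1) and transitions: from (i,k) at time t, go to (i,k) with probability r = 0, to (i+(−1)^{i+t}, 1−k) with probability 1−p−r = 1−p, and to (i, 1−k) with probability p. Then for every t ∈ ℕ, the first coordinate of X_{2t} has the same distribution as Y_t and its second coordinate equals 1 almost surely, where Y is the Markov chain on ℤ with Y_0 = 0 and increments −1, 0, +1, 2(−1)^{Y_t} with probabilities p(1−p), p², p(1−p), (1−p)² respectively. -/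
/-!
Write `ε i = (-1) ^ |i|`. In the forward equation a step at time `t` moves mass to the other level,
drawing it at `i` from `i` and from `i + (-1) ^ (i + t)`. Starting at an even time with all mass on
level `1`, one step puts all mass on level `0`, drawn from `i` and `i + ε i`; the next step, at an
odd time, brings it back to level `1`, drawn from `i` and `i - ε i`. Since `i - ε i` has sign
`-ε i`, the mass at `i` two steps later comes from `i`, from `i ± ε i = i ± 1` and from
`i - 2 ε i`, with weights `p²`, `p (1 - p)` and `(1 - p)²`: one step of `Y`.
-/

lemma neg_one_pow_natAbs_add_natCast (i : ℤ) (n : ℕ) :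
    (-1 : ℤ) ^ (i + n).natAbs = (-1) ^ i.natAbs * (-1) ^ n := by
  rw [← Int.coe_negOnePow ℤ, ← Int.coe_negOnePow ℤ, Int.negOnePow_add, Int.cast_id, Int.cast_id,
    Units.val_mul, Int.coe_negOnePow_natCast]

lemma neg_one_pow_natAbs_sub_neg_one_pow_natAbs (i : ℤ) :
    (-1 : ℤ) ^ (i - (-1) ^ i.natAbs).natAbs = -(-1) ^ i.natAbs := by
  rw [← Int.coe_negOnePow ℤ i, ← Int.coe_negOnePow ℤ, Int.negOnePow_sub]
  rcases Int.units_eq_one_or i.negOnePow with h | h <;> simp [h]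

lemma add_neg_one_pow_natAbs_add_sub {M : Type*} [AddCommMagma M] (g : ℤ → M) (i : ℤ) :
    g (i + (-1) ^ i.natAbs) + g (i - (-1) ^ i.natAbs) = g (i - 1) + g (i + 1) := by
  rw [← Int.coe_negOnePow]
  rcases Int.units_eq_one_or i.negOnePow with h | h <;> simp [h, sub_eq_add_neg, add_comm]

def SatisfiesForwardEquation (p : ℝ) (f : ℕ → ℤ × Fin 2 → ℝ) : Prop :=
  ∀ (t : ℕ) (i : ℤ) (k : Fin 2),
    f (t + 1) (i, k) = p * f t (i, 1 - k) + (1 - p) * f t (i + (-1 : ℤ) ^ (i + t).natAbs, 1 - k)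

section TwoSteps

variable {p : ℝ} {f : ℕ → ℤ × Fin 2 → ℝ} {n : ℕ}

lemma step_of_even (hf : SatisfiesForwardEquation p f)
    (hn : Even n) (hzero : ∀ i, f n (i, 0) = 0) (i : ℤ) :
    f (n + 1) (i, 1) = 0 ∧
      f (n + 1) (i, 0) = p * f n (i, 1) + (1 - p) * f n (i + (-1) ^ i.natAbs, 1) := by
  rw [hf, hf, neg_one_pow_natAbs_add_natCast, hn.neg_one_pow, mul_one]
  exact ⟨by simp [hzero], rfl⟩

lemma step_of_odd (hf : SatisfiesForwardEquation p f)
    (hn : Odd n) (hone : ∀ i, f n (i, 1) = 0) (i : ℤ) :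
    f (n + 1) (i, 1) = p * f n (i, 0) + (1 - p) * f n (i - (-1) ^ i.natAbs, 0) ∧
      f (n + 1) (i, 0) = 0 := by
  rw [hf, hf, neg_one_pow_natAbs_add_natCast, hn.neg_one_pow, mul_neg_one, ← sub_eq_add_neg]
  exact ⟨rfl, by simp [hone]⟩

lemma two_steps_of_even (hf : SatisfiesForwardEquation p f)
    (hn : Even n) (hzero : ∀ i, f n (i, 0) = 0) (i : ℤ) :
    f (n + 2) (i, 1) = p * (1 - p) * (f n (i - 1, 1) + f n (i + 1, 1)) + p ^ 2 * f n (i, 1)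
        + (1 - p) ^ 2 * f n (i - 2 * (-1) ^ i.natAbs, 1) ∧
      f (n + 2) (i, 0) = 0 := by
  have hodd := step_of_even hf hn hzero
  obtain ⟨hone, hzero'⟩ := step_of_odd hf hn.add_one (fun j ↦ (hodd j).1) i
  refine ⟨?_, hzero'⟩
  have hsym := add_neg_one_pow_natAbs_add_sub (fun j ↦ f n (j, 1)) i
  rw [hone, (hodd i).2, (hodd _).2, neg_one_pow_natAbs_sub_neg_one_pow_natAbs,
    ← sub_eq_add_neg, sub_sub, ← two_mul]
  linear_combination p * (1 - p) * hsym

end TwoSteps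

theorem stmt14_general (p : ℝ)
    (f : ℕ → ℤ × Fin 2 → ℝ) (g : ℕ → ℤ → ℝ)
    (hf0 : ∀ s : ℤ × Fin 2, f 0 s = if s = ((0 : ℤ), (1 : Fin 2)) then 1 else 0)
    (hfrec : ∀ (t : ℕ) (i : ℤ) (k : Fin 2),
      f (t + 1) (i, k)
        = p * f t (i, 1 - k)
          + (1 - p) * f t (i + (-1 : ℤ) ^ (i + t).natAbs, 1 - k))
    (hg0 : ∀ i : ℤ, g 0 i = if i = 0 then 1 else 0)
    (hgrec : ∀ (t : ℕ) (i : ℤ),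
      g (t + 1) i
        = p * (1 - p) * (g t (i - 1) + g t (i + 1)) + p ^ 2 * g t i
          + (1 - p) ^ 2 * g t (i - 2 * (-1 : ℤ) ^ i.natAbs)) :
    ∀ (t : ℕ) (i : ℤ), f (2 * t) (i, 1) = g t i ∧ f (2 * t) (i, 0) = 0 := by
  intro t
  induction t with
  | zero => intro i; simp [hf0, hg0]
  | succ t ih =>
    intro i
    obtain ⟨hone, hzero⟩ := two_steps_of_even hfrec (even_two_mul t) (fun j ↦ (ih j).2) i
    simp only [ih, ← hgrec] at hone
    exact ⟨hone, hzero⟩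

/-- With `r = 0`, two steps of the (time-inhomogeneous) chain `X` on `ℤ × {0,1}`
starting from `(0,1)` reproduce the chain `Y`: the first coordinate of `X_{2t}`
is distributed as `Y_t` and its second coordinate is `1` a.s.  Expressed through
the time-`t` distributions `f` of `X` and `g` of `Y`. -/
theorem stmt14 (p : ℝ) (hp0 : 0 ≤ p) (hp1 : p ≤ 1)
    (f : ℕ → ℤ × Fin 2 → ℝ) (g : ℕ → ℤ → ℝ)
    (hf0 : ∀ s : ℤ × Fin 2, f 0 s = if s = ((0 : ℤ), (1 : Fin 2)) then 1 else 0)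
    (hfrec : ∀ (t : ℕ) (i : ℤ) (k : Fin 2),
      f (t + 1) (i, k)
        = p * f t (i, 1 - k)
          + (1 - p) * f t (i + (-1 : ℤ) ^ (i + t).natAbs, 1 - k))
    (hg0 : ∀ i : ℤ, g 0 i = if i = 0 then 1 else 0)
    (hgrec : ∀ (t : ℕ) (i : ℤ),
      g (t + 1) i
        = p * (1 - p) * (g t (i - 1) + g t (i + 1)) + p ^ 2 * g t i
          + (1 - p) ^ 2 * g t (i - 2 * (-1 : ℤ) ^ i.natAbs)) :
    ∀ (t : ℕ) (i : ℤ), f (2 * t) (i, 1) = g t i ∧ f (2 * t) (i, 0) = 0 :=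
  stmt14_general p f g hf0 hfrec hg0 hgrec
end
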